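/- arXiv:2204.12599 — 2 statements merged into one kernel-verified Lean document; each statement's English description precedes it below -/
import Mathlib

section
/- For every integer δ ≥ 2 and every peak Λ ≤ 1/2, there exists a swap Schelling game (G,b,Λ) on a δ-regular graph G, a swap equilibrium σ, and a strategy profile σ* such that DoI(σ*)/DoI(σ) ≥ δ(δ+1)/(2δ+1). -/
open Finset

namespace SwapSchelling

variable {V : Type*} [Fintype V] [DecidableEq V]

open scoped Classical in
/-- The closed neighborhood `N[v]` of a node `v` in `G`, as a `Finset`. -/
noncomputable def closedNbhd (G : SimpleGraph V) (v : V) : Finset V :=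
  univ.filter (fun u => u = v ∨ G.Adj v u)

open scoped Classical in
/-- The degree `δ(v)` of a node `v` in `G`. -/
noncomputable def deg (G : SimpleGraph V) (v : V) : ℕ :=
  (univ.filter (fun u => G.Adj v u)).card

/-- The maximum degree `Δ(G)`. -/
noncomputable def maxDeg (G : SimpleGraph V) : ℕ := univ.sup (deg G)

/-- The minimum degree `δ(G)`. -/
noncomputable def minDeg (G : SimpleGraph V) : ℕ := sInf (Set.range (deg G))

open scoped Classical in
/-- `frac G c v` is the fraction of nodes in the closed neighborhood of `v` that have
the same color as `v` (that is, `f_i(σ)` for the agent `i` occupying node `v`). -/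
noncomputable def frac (G : SimpleGraph V) (c : V → Bool) (v : V) : ℝ :=
  (((closedNbhd G v).filter (fun u => c u = c v)).card : ℝ) / ((closedNbhd G v).card : ℝ)

/-- The coloring obtained from `c` after the agents on nodes `v` and `w` swap positions. -/
def swapColor (c : V → Bool) (v w : V) : V → Bool := c ∘ Equiv.swap v w

/-- A single-peaked utility function `p` with peak at `Λ`: `p 0 = 0`, `p` is strictly
increasing on `[0,Λ]`, `p Λ = 1`, and `p x = p (Λ(1-x)/(1-Λ))` for `x ∈ [Λ,1]`. -/
structure IsSinglePeaked (p : ℝ → ℝ) (Λ : ℝ) : Prop where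
  peak_mem : Λ ∈ Set.Ioo (0 : ℝ) 1
  map_zero : p 0 = 0
  strictMonoOn : StrictMonoOn p (Set.Icc 0 Λ)
  map_peak : p Λ = 1
  symm : ∀ x ∈ Set.Icc Λ 1, p x = p (Λ * (1 - x) / (1 - Λ))

/-- A strategy profile: a 2-coloring of the nodes with exactly `b` blue (`true`) nodes. -/
def IsProfile (c : V → Bool) (b : ℕ) : Prop :=
  (univ.filter (fun v => c v = true)).card = b

/-- The structural data of a swap Schelling game `(G, b, Λ)` with utility function `p`:
`G` is connected, there are `b` blue agents with `1 ≤ b ≤ n/2`, and `p` is a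
single-peaked utility function with peak `Λ`. -/
structure IsGame (G : SimpleGraph V) (b : ℕ) (Λ : ℝ) (p : ℝ → ℝ) : Prop where
  connected : G.Connected
  one_le_b : 1 ≤ b
  b_le_half : 2 * b ≤ Fintype.card V
  singlePeaked : IsSinglePeaked p Λ

/-- The swap of the two (differently colored) agents occupying nodes `v` and `w`
is profitable: both agents strictly increase their utility. -/
def ProfitableSwap (G : SimpleGraph V) (p : ℝ → ℝ) (c : V → Bool) (v w : V) : Prop :=
  c v ≠ c w ∧
  p (frac G (swapColor c v w) w) > p (frac G c v) ∧
  p (frac G (swapColor c v w) v) > p (frac G c w)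

/-- A swap equilibrium: no profitable swap exists. -/
def IsSwapEquilibrium (G : SimpleGraph V) (p : ℝ → ℝ) (c : V → Bool) : Prop :=
  ∀ v w, ¬ ProfitableSwap G p c v w

open scoped Classical in
/-- The degree of integration: the number of non-segregated agents. -/
noncomputable def DoI (G : SimpleGraph V) (c : V → Bool) : ℕ :=
  (univ.filter (fun v => frac G c v ≠ 1)).card

open scoped Classical in
/-- The number of monochromatic edges of `G` under the coloring `c`. -/
noncomputable def Phi (G : SimpleGraph V) (c : V → Bool) : ℕ :=
  (G.edgeFinset.filter (fun e => ∀ u ∈ e, ∀ w ∈ e, c u = c w)).card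

open scoped Classical in
/-- The number of edges of `G`. -/
noncomputable def numEdges (G : SimpleGraph V) : ℕ :=
  (univ.filter (fun e : Sym2 V => e ∈ G.edgeSet)).card

/-- A finset of nodes is an independent set of `G`. -/
def IsIndepSet (G : SimpleGraph V) (s : Finset V) : Prop :=
  ∀ u ∈ s, ∀ w ∈ s, ¬ G.Adj u w

open scoped Classical in
/-- The independence number `α(G)`. -/
noncomputable def indepNum (G : SimpleGraph V) : ℕ :=
  univ.sup (fun s : Finset V => if IsIndepSet G s then s.card else 0)

open scoped Classical in
/-- The degree of `v` inside the subgraph of `G` induced by the node set `s`. -/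
noncomputable def degOn (G : SimpleGraph V) (s : Finset V) (v : V) : ℕ :=
  (s.filter (fun u => G.Adj v u)).card

/-!
The graph is a cycle of `δ` copies of `K_{δ,δ}`: in each copy the edge between the two nodes `0`
is removed and each of these nodes is joined instead to a node `0` of a neighbouring copy, so
the graph stays `δ`-regular and connected.

If the blue agents form an independent set of a regular graph, no swap is profitable: a red agent
moving to a blue node either ends up segregated, with utility `p 1 = 0`, or (if it was adjacent)
has exactly one blue neighbour, which for `Λ ≤ 1/2` is the worst mixed neighbourhood. Putting
all `δ` blue agents on one side of one copy is such an equilibrium, and only that copy and one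
bridge endpoint, at most `2δ + 1` agents, are integrated. Putting instead one blue agent on a
bridge node of every copy integrates the `δ²` red agents of the other sides and the `δ` blue
ones.
-/

namespace IsSinglePeaked

variable {p : ℝ → ℝ} {Λ : ℝ}

lemma map_one (hp : IsSinglePeaked p Λ) : p 1 = 0 := by
  simpa [hp.map_zero] using hp.symm 1 ⟨hp.peak_mem.2.le, le_rfl⟩

lemma fold_mem_Icc (hp : IsSinglePeaked p Λ) {x : ℝ} (hΛx : Λ ≤ x) (hx1 : x ≤ 1) :
    Λ * (1 - x) / (1 - Λ) ∈ Set.Icc 0 Λ := by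
  obtain ⟨hΛ0, hΛ1⟩ := hp.peak_mem
  constructor
  · exact div_nonneg (mul_nonneg hΛ0.le (by linarith)) (by linarith)
  · rw [div_le_iff₀ (by linarith)]
    nlinarith

lemma nonneg (hp : IsSinglePeaked p Λ) {x : ℝ} (hx0 : 0 ≤ x) (hx1 : x ≤ 1) : 0 ≤ p x := by
  have hΛ0 := hp.peak_mem.1
  have h0 : (0 : ℝ) ∈ Set.Icc 0 Λ := ⟨le_rfl, hΛ0.le⟩
  rcases le_or_gt x Λ with hxΛ | hΛx
  · simpa [hp.map_zero] using hp.strictMonoOn.monotoneOn h0 ⟨hx0, hxΛ⟩ hx0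
  · rw [hp.symm x ⟨hΛx.le, hx1⟩]
    have hf := hp.fold_mem_Icc hΛx.le hx1
    simpa [hp.map_zero] using hp.strictMonoOn.monotoneOn h0 hf hf.1

lemma le_of_fold_le_of_le (hp : IsSinglePeaked p Λ) {x y : ℝ} (hΛx : Λ ≤ x) (hx1 : x ≤ 1)
    (hyx : y ≤ x) (hfy : Λ * (1 - x) / (1 - Λ) ≤ y) : p x ≤ p y := by
  have hfx := hp.fold_mem_Icc hΛx hx1
  rw [hp.symm x ⟨hΛx, hx1⟩]
  rcases le_or_gt y Λ with hyΛ | hΛy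
  · exact hp.strictMonoOn.monotoneOn hfx ⟨hfx.1.trans hfy, hyΛ⟩ hfy
  · have hfy' := hp.fold_mem_Icc hΛy.le (hyx.trans hx1)
    rw [hp.symm y ⟨hΛy.le, hyx.trans hx1⟩]
    refine hp.strictMonoOn.monotoneOn hfx hfy' ?_
    obtain ⟨hΛ0, hΛ1⟩ := hp.peak_mem
    gcongr

lemma map_deg_div_le (hp : IsSinglePeaked p Λ) (hΛ : Λ ≤ 1 / 2) {d r : ℕ} (hr1 : 1 ≤ r)
    (hrd : r ≤ d) : p (d / (d + 1)) ≤ p (r / (d + 1)) := by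
  have hΛ0 := hp.peak_mem.1
  have hr : (1 : ℝ) ≤ r := by exact_mod_cast hr1
  have hd : (r : ℝ) ≤ d := by exact_mod_cast hrd
  have hD : (0 : ℝ) < d + 1 := by positivity
  have hfold : Λ * (1 - d / (d + 1)) / (1 - Λ) = Λ / (1 - Λ) / (d + 1) := by
    field_simp
    ring
  refine hp.le_of_fold_le_of_le ?_ ?_ ?_ ?_
  · rw [le_div_iff₀ hD]; nlinarith
  · rw [div_le_one hD]; linarith
  · gcongr
  · rw [hfold]
    gcongr
    rw [div_le_iff₀ (by linarith)]
    nlinarith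

end IsSinglePeaked

section Neighborhoods

variable (G : SimpleGraph V) (c : V → Bool) {u v w : V}

@[simp]
lemma mem_closedNbhd : u ∈ closedNbhd G v ↔ u = v ∨ G.Adj v u := by
  simp [closedNbhd]

open scoped Classical in
lemma card_closedNbhd (v : V) : (closedNbhd G v).card = deg G v + 1 := by
  have h : closedNbhd G v = insert v (univ.filter (G.Adj v)) := by
    ext u
    simp
  rw [h, card_insert_of_notMem (by simp), deg]

lemma frac_eq_div (v : V) :
    frac G c v = ((closedNbhd G v).filter (fun u => c u = c v)).card / (deg G v + 1) := by
  rw [frac, card_closedNbhd]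
  push_cast
  rfl

lemma frac_eq_one_iff : frac G c v = 1 ↔ ∀ u, G.Adj v u → c u = c v := by
  have hpos : ((closedNbhd G v).card : ℝ) ≠ 0 := by
    rw [card_closedNbhd]
    positivity
  rw [frac, div_eq_one_iff_eq hpos, Nat.cast_inj, card_filter_eq_iff]
  simp only [mem_closedNbhd]
  constructor
  · exact fun h u hu => h u (Or.inr hu)
  · rintro h u (rfl | hu)
    exacts [rfl, h u hu]

lemma frac_mem_Icc (v : V) : frac G c v ∈ Set.Icc 0 1 := by
  rw [frac]
  exact ⟨by positivity,
    div_le_one_of_le₀ (by exact_mod_cast card_le_card (filter_subset _ _)) (by positivity)⟩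

variable {G c}

lemma frac_ne_one_of_adj (hu : G.Adj v u) (hc : c u ≠ c v) : frac G c v ≠ 1 :=
  fun h => hc ((frac_eq_one_iff G c).mp h u hu)

lemma exists_frac_eq_div_of_adj (hu : G.Adj v u) (hc : c u ≠ c v) :
    ∃ r : ℕ, 1 ≤ r ∧ r ≤ deg G v ∧ frac G c v = r / (deg G v + 1) := by
  refine ⟨_, ?_, ?_, frac_eq_div G c v⟩
  · exact card_pos.mpr ⟨v, by simp⟩
  · have hsub : (closedNbhd G v).filter (fun u => c u = c v) ⊆ (closedNbhd G v).erase u :=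
      fun x hx => by
        simp only [mem_filter] at hx
        exact mem_erase.mpr ⟨by rintro rfl; exact hc hx.2, hx.1⟩
    have := card_le_card hsub
    rwa [card_erase_of_mem (by simp [hu]), card_closedNbhd, Nat.add_sub_cancel] at this

lemma frac_eq_deg_div_of_forall_adj (hw : G.Adj v w) (hcw : c w ≠ c v)
    (h : ∀ u, G.Adj v u → u ≠ w → c u = c v) : frac G c v = deg G v / (deg G v + 1) := by
  have hfilter : (closedNbhd G v).filter (fun u => c u = c v) = (closedNbhd G v).erase w := by
    ext u
    simp only [mem_filter, mem_erase, mem_closedNbhd]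
    constructor
    · rintro ⟨hu, hcu⟩
      exact ⟨by rintro rfl; exact hcw hcu, hu⟩
    · rintro ⟨huw, rfl | hu⟩
      exacts [⟨Or.inl rfl, rfl⟩, ⟨Or.inr hu, h u hu huw⟩]
  rw [frac_eq_div, hfilter, card_erase_of_mem (by simp [hw]), card_closedNbhd,
    Nat.add_sub_cancel]

lemma DoI_le_card {s : Finset V} (h : ∀ v ∉ s, frac G c v = 1) : DoI G c ≤ s.card :=
  card_le_card fun v hv => by_contra fun hvs => (mem_filter.mp hv).2 (h v hvs)

lemma card_le_DoI {s : Finset V} (h : ∀ v ∈ s, frac G c v ≠ 1) : s.card ≤ DoI G c :=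
  card_le_card fun v hv => mem_filter.mpr ⟨mem_univ v, h v hv⟩

end Neighborhoods

section SwapColor

variable {α : Type*} [DecidableEq α] (c : α → Bool)

lemma swapColor_comm (v w : α) : swapColor c v w = swapColor c w v := by
  rw [swapColor, swapColor, Equiv.swap_comm]

@[simp]
lemma swapColor_apply_left (v w : α) : swapColor c v w v = c w := by
  simp [swapColor]

lemma swapColor_apply_of_ne_of_ne {u v w : α} (hv : u ≠ v) (hw : u ≠ w) :
    swapColor c v w u = c u := by
  simp [swapColor, Equiv.swap_apply_of_ne_of_ne hv hw]

end SwapColor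

section Equilibrium

variable {G : SimpleGraph V} {c : V → Bool}

lemma map_frac_swapColor_le {p : ℝ → ℝ} {Λ : ℝ} (hp : IsSinglePeaked p Λ) (hΛ : Λ ≤ 1 / 2)
    {d : ℕ} (hreg : ∀ v, deg G v = d) (hind : ∀ v w, c v = true → c w = true → ¬ G.Adj v w)
    {v w : V} (hv : c v = true) (hw : c w = false) :
    p (frac G (swapColor c v w) v) ≤ p (frac G c w) := by
  have hred : ∀ u, G.Adj v u → u ≠ w → swapColor c v w u = swapColor c v w v := by
    intro u hu huw
    rw [swapColor_apply_of_ne_of_ne c (G.ne_of_adj hu).symm huw, swapColor_apply_left, hw]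
    cases hcu : c u
    · rfl
    · exact absurd hu (hind v u hv hcu)
  by_cases hvw : G.Adj v w
  · obtain ⟨r, hr1, hrd, hfrac⟩ :=
      exists_frac_eq_div_of_adj hvw.symm (c := c) (by rw [hv, hw]; simp)
    have hcw : swapColor c v w w ≠ swapColor c v w v := by
      simp [swapColor, hv, hw]
    rw [frac_eq_deg_div_of_forall_adj hvw hcw hred, hfrac, hreg, hreg]
    exact hp.map_deg_div_le hΛ hr1 (hreg w ▸ hrd)
  · have hone : frac G (swapColor c v w) v = 1 :=
      (frac_eq_one_iff G _).mpr fun u hu => hred u hu (by rintro rfl; exact hvw hu)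
    rw [hone, hp.map_one]
    exact hp.nonneg (frac_mem_Icc G c w).1 (frac_mem_Icc G c w).2

lemma isSwapEquilibrium_of_blue_indep {p : ℝ → ℝ} {Λ : ℝ} (hp : IsSinglePeaked p Λ)
    (hΛ : Λ ≤ 1 / 2) {d : ℕ} (hreg : ∀ v, deg G v = d)
    (hind : ∀ v w, c v = true → c w = true → ¬ G.Adj v w) : IsSwapEquilibrium G p c := by
  rintro v w ⟨hne, hvw, hwv⟩
  cases hv : c v <;> cases hw : c w <;> simp only [hv, hw, ne_eq, not_true_eq_false] at hne
  · rw [swapColor_comm] at hvw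
    exact (map_frac_swapColor_le hp hΛ hreg hind hw hv).not_gt hvw
  · exact (map_frac_swapColor_le hp hΛ hreg hind hv hw).not_gt hwv

end Equilibrium

section Isomorphism

variable {W : Type*} [Fintype W] [DecidableEq W] {G : SimpleGraph V} {H : SimpleGraph W}

lemma closedNbhd_iso (φ : G ≃g H) (v : V) :
    closedNbhd H (φ v) = (closedNbhd G v).map φ.toEquiv.toEmbedding := by
  ext x
  obtain ⟨u, rfl⟩ := φ.surjective x
  rw [mem_closedNbhd, φ.map_adj_iff, φ.injective.eq_iff]
  exact ((mem_map' φ.toEquiv.toEmbedding).trans (mem_closedNbhd G)).symm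

lemma deg_iso (φ : G ≃g H) (v : V) : deg H (φ v) = deg G v := by
  have h := card_closedNbhd H (φ v)
  rw [closedNbhd_iso, card_map, card_closedNbhd] at h
  omega

lemma frac_iso (φ : G ≃g H) (c : W → Bool) (v : V) : frac H c (φ v) = frac G (c ∘ φ) v := by
  simp [frac, closedNbhd_iso, filter_map, card_map]

lemma DoI_iso (φ : G ≃g H) (c : V → Bool) : DoI H (c ∘ φ.symm) = DoI G c := by
  rw [DoI, DoI, ← map_univ_equiv φ.toEquiv, filter_map, card_map]
  simp [Function.comp_def, frac_iso]

end Isomorphism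

lemma isProfile_comp_equiv {α β : Type*} [Fintype α] [Fintype β] (e : α ≃ β) {c : β → Bool}
    {b : ℕ} : IsProfile (c ∘ e) b ↔ IsProfile c b := by
  rw [IsProfile, IsProfile, ← map_univ_equiv e, filter_map, card_map]
  rfl

section BicliqueCycle

variable {δ : ℕ} [NeZero δ]

def bridgeCopy (s : Bool) (t : Fin δ) : Fin δ := if s then t - 1 else t + 1

lemma bridgeCopy_not_bridgeCopy (s : Bool) (t : Fin δ) :
    bridgeCopy (!s) (bridgeCopy s t) = t := by
  cases s <;> simp [bridgeCopy]

/-- Node `(t, s, i)` is `(copy, side, position)`. Its neighbour at position `j` lies on the other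
side of the same copy, except that the edge between the two nodes `0` is redirected to the
neighbouring copy `bridgeCopy s t`. -/
def neighbor (a : Fin δ × Bool × Fin δ) (j : Fin δ) : Fin δ × Bool × Fin δ :=
  (if a.2.2 = 0 ∧ j = 0 then bridgeCopy a.2.1 a.1 else a.1, !a.2.1, j)

variable (δ) in
/-- `δ` copies of `K_{δ,δ}`, each with the edge between its two nodes `0` removed, joined in a
cycle by bridges from node `0` of side `false` of copy `t` to node `0` of side `true` of copy
`t + 1`. -/
def bicliqueCycle : SimpleGraph (Fin δ × Bool × Fin δ) where
  Adj a b := b = neighbor a b.2.2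
  symm := by
    constructor
    rintro ⟨t, s, i⟩ ⟨t', s', j⟩ h
    simp only [neighbor, Prod.mk.injEq] at h ⊢
    obtain ⟨ht, rfl, -⟩ := h
    refine ⟨?_, (Bool.not_not s).symm, trivial⟩
    split_ifs at ht with hij <;> simp_all [and_comm, bridgeCopy_not_bridgeCopy]
  loopless := by
    constructor
    rintro ⟨t, s, i⟩ h
    simp [neighbor] at h

lemma bicliqueCycle_adj_neighbor (a : Fin δ × Bool × Fin δ) (j : Fin δ) :
    (bicliqueCycle δ).Adj a (neighbor a j) :=
  rfl

lemma bicliqueCycle_adj_iff {a b : Fin δ × Bool × Fin δ} :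
    (bicliqueCycle δ).Adj a b ↔ ∃ j, b = neighbor a j :=
  ⟨fun h => ⟨_, h⟩, by rintro ⟨j, rfl⟩; rfl⟩

open scoped Classical in
lemma deg_bicliqueCycle (a : Fin δ × Bool × Fin δ) : deg (bicliqueCycle δ) a = δ := by
  have h : univ.filter ((bicliqueCycle δ).Adj a) = univ.image (neighbor a) := by
    ext b
    simp [bicliqueCycle_adj_iff, eq_comm]
  rw [deg, h, card_image_of_injective _ fun j j' h => congrArg (·.2.2) h, card_univ,
    Fintype.card_fin]

lemma fin_one_ne_zero (hδ : 2 ≤ δ) : (1 : Fin δ) ≠ 0 := by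
  rw [ne_eq, Fin.ext_iff, Fin.val_one', Fin.val_zero, Nat.mod_eq_of_lt hδ]
  exact one_ne_zero

lemma neighbor_one (hδ : 2 ≤ δ) (t : Fin δ) (s : Bool) (i : Fin δ) :
    neighbor (t, s, i) 1 = (t, !s, 1) := by
  simp [neighbor, fin_one_ne_zero hδ]

lemma bicliqueCycle_reachable_hub (hδ : 2 ≤ δ) (t : Fin δ) (s : Bool) (i : Fin δ) :
    (bicliqueCycle δ).Reachable (t, s, i) (t, false, 1) := by
  have hadj (s : Bool) (i : Fin δ) : (bicliqueCycle δ).Adj (t, s, i) (t, !s, 1) :=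
    neighbor_one hδ t s i ▸ bicliqueCycle_adj_neighbor _ _
  cases s
  · exact (hadj false i).reachable.trans (hadj true 1).reachable
  · exact (hadj true i).reachable

lemma bicliqueCycle_reachable_hub_add_one (hδ : 2 ≤ δ) (t : Fin δ) :
    (bicliqueCycle δ).Reachable (t, false, 1) (t + 1, false, 1) := by
  have hbridge : (bicliqueCycle δ).Adj (t, false, 0) (t + 1, true, 0) := by
    simpa [neighbor, bridgeCopy] using bicliqueCycle_adj_neighbor (t, false, 0) 0
  exact (bicliqueCycle_reachable_hub hδ t false 0).symm.trans
    (hbridge.reachable.trans (bicliqueCycle_reachable_hub hδ _ true 0))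

lemma bicliqueCycle_connected (hδ : 2 ≤ δ) : (bicliqueCycle δ).Connected := by
  have hhub (t : Fin δ) : (bicliqueCycle δ).Reachable (0, false, 1) (t, false, 1) := by
    obtain ⟨n, rfl⟩ := Nat.exists_eq_succ_of_ne_zero (NeZero.ne δ)
    induction t using Fin.induction with
    | zero => rfl
    | succ i ih =>
      rw [← Fin.coeSucc_eq_succ]
      exact ih.trans (bicliqueCycle_reachable_hub_add_one hδ _)
  rw [SimpleGraph.connected_iff_exists_forall_reachable]
  exact ⟨(0, false, 1), fun ⟨t, s, i⟩ =>
    (hhub t).trans (bicliqueCycle_reachable_hub hδ t s i).symm⟩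

variable (δ) in
def clustered (a : Fin δ × Bool × Fin δ) : Bool := decide (a.1 = 0 ∧ a.2.1 = false)

variable (δ) in
def spread (a : Fin δ × Bool × Fin δ) : Bool := decide (a.2.1 = false ∧ a.2.2 = 0)

lemma isProfile_clustered : IsProfile (clustered δ) δ := by
  have h : univ.filter (clustered δ · = true) = {0} ×ˢ {false} ×ˢ univ := by
    ext ⟨t, s, i⟩
    simp only [mem_filter, mem_product, mem_singleton, mem_univ, clustered, decide_eq_true_eq,
      true_and, and_true]
  simp [IsProfile, h]

lemma isProfile_spread : IsProfile (spread δ) δ := by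
  have h : univ.filter (spread δ · = true) = univ ×ˢ {(false, 0)} := by
    ext ⟨t, s, i⟩
    simp only [mem_filter, mem_product, mem_singleton, mem_univ, spread, decide_eq_true_eq,
      true_and, Prod.mk.injEq]
  simp [IsProfile, h]

lemma clustered_blue_indep (v w : Fin δ × Bool × Fin δ) (hv : clustered δ v = true)
    (hw : clustered δ w = true) : ¬ (bicliqueCycle δ).Adj v w := by
  rintro (h : w = neighbor v w.2.2)
  simp only [clustered, decide_eq_true_eq] at hv hw
  have := congrArg (·.2.1) h
  simp [neighbor, hv.2, hw.2] at this

lemma DoI_clustered_le : DoI (bicliqueCycle δ) (clustered δ) ≤ 2 * δ + 1 := by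
  -- outside copy `0`, only the bridge endpoint `(1, true, 0)` has a blue neighbour
  have hseg : ∀ v ∉ insert (1, true, 0) ({0} ×ˢ univ),
      frac (bicliqueCycle δ) (clustered δ) v = 1 := by
    rintro ⟨t, s, i⟩ hv
    simp only [mem_insert, mem_product, mem_singleton, mem_univ, and_true, Prod.mk.injEq,
      not_or] at hv
    rw [frac_eq_one_iff]
    intro u hu
    obtain ⟨j, rfl⟩ := bicliqueCycle_adj_iff.mp hu
    obtain ⟨hv1, ht⟩ := hv
    cases s
    · simp [clustered, neighbor, ht]
    · simp only [clustered, neighbor, bridgeCopy, Bool.not_true, decide_eq_decide]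
      split_ifs with hij
      · simpa [sub_eq_zero, hij.1] using hv1
      · simp [ht]
  calc DoI (bicliqueCycle δ) (clustered δ) ≤ _ := DoI_le_card hseg
    _ ≤ _ := card_insert_le _ _
    _ = 2 * δ + 1 := by simp

lemma one_le_DoI_clustered (hδ : 2 ≤ δ) : 1 ≤ DoI (bicliqueCycle δ) (clustered δ) := by
  refine card_le_DoI (s := {(0, false, 0)}) ?_
  simp only [mem_singleton, forall_eq]
  refine frac_ne_one_of_adj (neighbor_one hδ 0 false 0 ▸ bicliqueCycle_adj_neighbor _ 1) ?_
  simp [clustered]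

lemma DoI_spread_ge (hδ : 2 ≤ δ) : δ * (δ + 1) ≤ DoI (bicliqueCycle δ) (spread δ) := by
  have hmixed : ∀ v ∈ univ ×ˢ ({true} ×ˢ univ ∪ {(false, 0)}),
      frac (bicliqueCycle δ) (spread δ) v ≠ 1 := by
    rintro ⟨t, s, i⟩ hv
    simp only [mem_product, mem_univ, mem_union, mem_singleton, Prod.mk.injEq, true_and,
      and_true] at hv
    rcases hv with rfl | ⟨rfl, rfl⟩
    · exact frac_ne_one_of_adj (bicliqueCycle_adj_neighbor (t, true, i) 0)
        (by simp [spread, neighbor])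
    · exact frac_ne_one_of_adj (neighbor_one hδ t false 0 ▸ bicliqueCycle_adj_neighbor _ 1)
        (by simp [spread])
  calc δ * (δ + 1) = _ := by simp
    _ ≤ _ := card_le_DoI hmixed

lemma bound_le_DoI_spread_div_DoI_clustered (hδ : 2 ≤ δ) :
    ((δ : ℝ) * ((δ : ℝ) + 1)) / (2 * (δ : ℝ) + 1) ≤
      (DoI (bicliqueCycle δ) (spread δ) : ℝ) / (DoI (bicliqueCycle δ) (clustered δ) : ℝ) := by
  have hspread : ((δ * (δ + 1) : ℕ) : ℝ) ≤ DoI (bicliqueCycle δ) (spread δ) := by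
    exact_mod_cast DoI_spread_ge hδ
  have hclustered : (DoI (bicliqueCycle δ) (clustered δ) : ℝ) ≤ ((2 * δ + 1 : ℕ) : ℝ) := by
    exact_mod_cast DoI_clustered_le
  have hpos : (0 : ℝ) < DoI (bicliqueCycle δ) (clustered δ) := by
    exact_mod_cast one_le_DoI_clustered hδ
  push_cast at hspread hclustered
  exact div_le_div₀ (by positivity) hspread hpos hclustered

end BicliqueCycle

/-- For every `δ ≥ 2` and every peak `Λ ≤ 1/2`, there exists a game on a
`δ`-regular graph, a swap equilibrium `σ` and a profile `σ*` such that
`DoI(σ*)/DoI(σ) ≥ δ(δ+1)/(2δ+1)`. -/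
theorem price_of_anarchy_lower_bound_regular
    (δ : ℕ) (hδ : 2 ≤ δ) (Λ : ℝ) (hΛ : Λ ≤ 1 / 2)
    (p : ℝ → ℝ) (hp : IsSinglePeaked p Λ) :
    ∃ (n : ℕ) (G : SimpleGraph (Fin n)) (b : ℕ),
      IsGame G b Λ p ∧ (∀ v, deg G v = δ) ∧
      ∃ c cstar : Fin n → Bool, IsProfile c b ∧ IsProfile cstar b ∧
        IsSwapEquilibrium G p c ∧
        ((δ : ℝ) * ((δ : ℝ) + 1)) / (2 * (δ : ℝ) + 1) ≤ (DoI G cstar : ℝ) / (DoI G c : ℝ) := by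
  have : NeZero δ := ⟨by omega⟩
  let e := Fintype.equivFin (Fin δ × Bool × Fin δ)
  let φ : bicliqueCycle δ ≃g (bicliqueCycle δ).map e := SimpleGraph.Iso.map e (bicliqueCycle δ)
  have hreg (v : Fin _) : deg ((bicliqueCycle δ).map e) v = δ := by
    rw [← φ.apply_symm_apply v, deg_iso, deg_bicliqueCycle]
  have hcard : 2 * δ ≤ Fintype.card (Fin (Fintype.card (Fin δ × Bool × Fin δ))) := by
    simp only [Fintype.card_fin, Fintype.card_prod, Fintype.card_bool]
    nlinarith
  refine ⟨_, (bicliqueCycle δ).map e, δ,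
    ⟨φ.connected_iff.mp (bicliqueCycle_connected hδ), by omega, hcard, hp⟩, hreg,
    clustered δ ∘ φ.symm, spread δ ∘ φ.symm,
    (isProfile_comp_equiv φ.symm.toEquiv).mpr isProfile_clustered,
    (isProfile_comp_equiv φ.symm.toEquiv).mpr isProfile_spread,
    isSwapEquilibrium_of_blue_indep hp hΛ hreg fun v w hv hw hvw => ?_, ?_⟩
  · exact clustered_blue_indep _ _ hv hw (φ.symm.map_adj_iff.mpr hvw)
  · rw [DoI_iso φ, DoI_iso φ]
    exact bound_le_DoI_spread_div_DoI_clustered hδ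

end SwapSchelling
end

section
/- Let G be a finite simple graph, let k ≥ 1 be an integer, and let U be a subset of the vertices of G with |U| ≥ 2. Then there exists a partition {V_1, …, V_k} of U that is balanced, i.e., |V_t| ≥ ⌊|U|/k⌋ for every t ∈ {1,…,k}, and such that for at least one index t ∈ {1,…,k}, V_t is nonempty and every vertex v ∈ V_t has degree at most ⌊δ(v)/k⌋ in the subgraph of G induced by V_t, where δ(v) denotes the degree of v in G. -/
open Finset

namespace SwapSchelling

variable {V : Type*} [Fintype V] [DecidableEq V]

/-!
Colour `U` with `k` colours so as to minimise the number of monochromatic edges of `G[U]`.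
Recolouring a single vertex `v` changes that number by exactly the change in the number of
neighbours of `v` in its own class, so at a minimiser every `v ∈ U` has at most as many
neighbours in its own class as in any other class, hence at most `⌊δ(v)/k⌋`; this persists on
subsets of a class. A largest class has at least `max ⌊|U|/k⌋ 1` vertices: keep that many as
the distinguished part and spread the remaining vertices of `U` over the other `k - 1` parts,
at least `⌊|U|/k⌋` to each.
-/

theorem sum_sum_eq_row_add_column {α M : Type*} [DecidableEq α] [AddCommMonoid M]
    {s : Finset α} {f : α → α → M} {v : α} (hv : v ∈ s) (hvv : f v v = 0)
    (hf : ∀ u w, u ≠ v → w ≠ v → f u w = 0) :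
    ∑ u ∈ s, ∑ w ∈ s, f u w = ∑ w ∈ s, f v w + ∑ u ∈ s, f u v := by
  rw [← add_sum_erase s _ hv, ← add_sum_erase s (fun u => f u v) hv, hvv, zero_add]
  congr 1
  exact sum_congr rfl fun u hu =>
    sum_eq_single v (fun w _ hw => hf u w (ne_of_mem_erase hu) hw) (absurd hv)

section Coloring

open scoped Classical

variable {α ι : Type*} (G : SimpleGraph α)

theorem degOn_mono {s t : Finset α} (h : s ⊆ t) (v : α) : degOn G s v ≤ degOn G t v :=
  card_le_card (filter_subset_filter _ h)

theorem degOn_le_deg [Fintype α] (s : Finset α) (v : α) : degOn G s v ≤ deg G v :=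
  card_le_card (filter_subset_filter _ (subset_univ s))

variable [DecidableEq ι] (U : Finset α)

theorem degOn_filter_eq_sum (c : α → ι) (j : ι) (v : α) :
    degOn G {w ∈ U | c w = j} v = ∑ w ∈ U, if G.Adj v w ∧ c w = j then 1 else 0 := by
  rw [degOn, filter_filter, card_filter]
  exact sum_congr rfl fun w _ => by simp only [and_comm]

theorem sum_degOn_fiber [Fintype ι] (c : α → ι) (v : α) :
    ∑ j, degOn G {w ∈ U | c w = j} v = degOn G U v := by
  simp only [degOn_filter_eq_sum]
  rw [sum_comm, degOn, card_filter]
  refine sum_congr rfl fun w _ => ?_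
  by_cases h : G.Adj v w <;> simp [h]

noncomputable def monochromaticDegreeSum (c : α → ι) : ℕ :=
  ∑ v ∈ U, degOn G {w ∈ U | c w = c v} v

theorem monochromaticDegreeSum_update [DecidableEq α] (c : α → ι) {v : α} (hv : v ∈ U)
    (j : ι) :
    (monochromaticDegreeSum G U (Function.update c v j) : ℤ) =
      monochromaticDegreeSum G U c +
        2 * ((degOn G {w ∈ U | c w = j} v : ℤ) - degOn G {w ∈ U | c w = c v} v) := by
  set c' := Function.update c v j
  let m : (α → ι) → α → α → ℤ := fun c u w => if G.Adj u w ∧ c w = c u then 1 else 0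
  have h_sum : ∀ c, (monochromaticDegreeSum G U c : ℤ) = ∑ u ∈ U, ∑ w ∈ U, m c u w := by
    intro c
    simp [monochromaticDegreeSum, degOn_filter_eq_sum, m]
  have h_symm : ∀ c u w, m c u w = m c w u := by
    intro c u w
    simp only [m, G.adj_comm, eq_comm]
  have h_row : ∑ w ∈ U, (m c' v w - m c v w) =
      (degOn G {w ∈ U | c w = j} v : ℤ) - degOn G {w ∈ U | c w = c v} v := by
    rw [sum_sub_distrib, degOn_filter_eq_sum, degOn_filter_eq_sum]
    push_cast
    congr 1
    refine sum_congr rfl fun w _ => ?_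
    by_cases hvw : G.Adj v w
    · simp [m, c', hvw, Function.update_of_ne hvw.ne']
    · simp [m, hvw]
  have h_col : ∑ u ∈ U, (m c' u v - m c u v) = ∑ w ∈ U, (m c' v w - m c v w) :=
    sum_congr rfl fun u _ => by rw [h_symm c' u v, h_symm c u v]
  have h_cross : ∑ u ∈ U, ∑ w ∈ U, (m c' u w - m c u w) =
      ∑ w ∈ U, (m c' v w - m c v w) + ∑ u ∈ U, (m c' u v - m c u v) :=
    sum_sum_eq_row_add_column hv (by simp [m]) fun u w hu hw => by
      simp only [m, c', Function.update_of_ne hu, Function.update_of_ne hw, sub_self]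
  rw [h_col, h_row] at h_cross
  simp only [sum_sub_distrib, ← h_sum] at h_cross
  linarith

theorem exists_locally_optimal_coloring [Nonempty ι] :
    ∃ c : α → ι, ∀ v ∈ U, ∀ j,
      degOn G {w ∈ U | c w = c v} v ≤ degOn G {w ∈ U | c w = j} v := by
  refine ⟨Function.argmin (monochromaticDegreeSum G U), fun v hv j => ?_⟩
  have h_min := Function.argmin_le (monochromaticDegreeSum G U)
    (Function.update (Function.argmin (monochromaticDegreeSum G U)) v j)
  zify at h_min
  rw [monochromaticDegreeSum_update G U _ hv] at h_min
  omega

theorem degOn_fiber_le_deg_div [Fintype α] [Fintype ι] (c : α → ι) {v : α}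
    (hv : ∀ j, degOn G {w ∈ U | c w = c v} v ≤ degOn G {w ∈ U | c w = j} v) :
    degOn G {w ∈ U | c w = c v} v ≤ deg G v / Fintype.card ι := by
  have : Nonempty ι := ⟨c v⟩
  rw [Nat.le_div_iff_mul_le Fintype.card_pos]
  calc degOn G {w ∈ U | c w = c v} v * Fintype.card ι
      = ∑ _j : ι, degOn G {w ∈ U | c w = c v} v := by simp [mul_comm]
    _ ≤ ∑ j, degOn G {w ∈ U | c w = j} v := sum_le_sum fun j _ => hv j
    _ = degOn G U v := sum_degOn_fiber G U c v
    _ ≤ deg G v := degOn_le_deg G U v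

end Coloring

section Balancing

variable {α ι : Type*} [Fintype ι] [DecidableEq ι]

theorem exists_card_le_mul_card_fiber [Nonempty ι] (U : Finset α) (c : α → ι) :
    ∃ t, #U ≤ Fintype.card ι * #{v ∈ U | c v = t} := by
  obtain ⟨t, -, ht⟩ := exists_max_image univ (fun j => #{v ∈ U | c v = j}) univ_nonempty
  refine ⟨t, ?_⟩
  rw [mul_comm, ← card_univ]
  exact card_le_mul_card_image_of_maps_to (fun v _ => mem_univ (c v)) _ fun j _ => ht j (mem_univ j)

theorem exists_fiber_card_ge [Nonempty ι] (R : Finset α) {q : ℕ}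
    (h : Fintype.card ι * q ≤ #R) : ∃ g : α → ι, ∀ i, q ≤ #{v ∈ R | g v = i} := by
  obtain ⟨e⟩ : Nonempty (ι × Fin q ↪ R) :=
    Function.Embedding.nonempty_of_card_le (by simpa using h)
  have he : Function.Injective fun p => (e p : α) := Subtype.val_injective.comp e.injective
  refine ⟨Function.extend (fun p => (e p : α)) Prod.fst fun _ => Classical.arbitrary ι,
    fun i => ?_⟩
  let row : Fin q ↪ α := ((Function.Embedding.sectR i (Fin q)).trans e).trans (.subtype _)
  calc q = #(univ.map row) := by simp
    _ ≤ _ := by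
        refine card_le_card fun x hx => ?_
        obtain ⟨m, -, rfl⟩ := mem_map.1 hx
        exact mem_filter.2 ⟨(e (i, m)).2, he.extend_apply _ _ (i, m)⟩

theorem exists_balanced_coloring_with_fiber_subset [DecidableEq α] {U T : Finset α}
    (hTU : T ⊆ U) (hT : T.Nonempty) (hTcard : #U / Fintype.card ι ≤ #T) (t : ι) :
    ∃ f : α → ι, (∀ i, #U / Fintype.card ι ≤ #{v ∈ U | f v = i}) ∧
      {v ∈ U | f v = t}.Nonempty ∧ {v ∈ U | f v = t} ⊆ T := by
  rcases subsingleton_or_nontrivial ι with hι | hι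
  · have : Nonempty ι := ⟨t⟩
    have hk : Fintype.card ι = 1 :=
      le_antisymm (Fintype.card_le_one_iff_subsingleton.2 hι) Fintype.card_pos
    rw [hk, Nat.div_one] at hTcard ⊢
    have hUT : U = T := (eq_of_subset_of_card_le hTU hTcard).symm
    exact ⟨fun _ => t, fun i => by simp [Subsingleton.elim t i, hUT], by simpa [hUT],
      by simp [hUT]⟩
  set q := #U / Fintype.card ι
  obtain ⟨S, hST, hScard⟩ := exists_subset_card_eq (max_le hTcard hT.card_pos)
  have : Nonempty {i // i ≠ t} := nonempty_subtype.2 (exists_ne t)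
  have h_rest : Fintype.card {i // i ≠ t} * q ≤ #(U \ S) := by
    have hkq : Fintype.card ι * q ≤ #U := mul_comm q _ ▸ Nat.div_mul_le_self _ _
    rw [Fintype.card_subtype_compl, Fintype.card_subtype_eq, card_sdiff_of_subset (hST.trans hTU),
      hScard, Nat.sub_one_mul]
    rcases Nat.eq_zero_or_pos q with hq | hq
    · simp [hq]
    · rw [max_eq_left hq]
      omega
  obtain ⟨g, hg⟩ := exists_fiber_card_ge (U \ S) h_rest
  let f : α → ι := fun v => if v ∈ S then t else g v
  have hf_t : {v ∈ U | f v = t} = S := by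
    ext v
    by_cases hv : v ∈ S
    · simp [f, hv, hST.trans hTU hv]
    · simp [f, hv, (g v).2]
  have hf_ne : ∀ i (hi : i ≠ t), {v ∈ U | f v = i} = {v ∈ U \ S | g v = ⟨i, hi⟩} := by
    intro i hi
    ext v
    by_cases hv : v ∈ S
    · simp [f, hv, Ne.symm hi]
    · simp [f, hv, Subtype.ext_iff]
  refine ⟨f, fun i => ?_, ?_, hf_t ▸ hST⟩
  · by_cases hi : i = t
    · subst hi
      rw [hf_t, hScard]
      exact le_max_left _ _
    · rw [hf_ne i hi]
      exact hg _
  · rw [hf_t, ← card_pos, hScard]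
    exact lt_max_of_lt_right one_pos

end Balancing

/-- For every graph `G`, every `k ≥ 1` and every vertex subset `U` with
`|U| ≥ 2`, there is a balanced `k`-partition `{V_1,…,V_k}` of `U` (each part of size at
least `⌊|U|/k⌋`) such that some part `V_t` is nonempty and every `v ∈ V_t` has degree at
most `⌊δ(v)/k⌋` in the subgraph of `G` induced by `V_t`. -/
theorem balanced_k_max_cut
    {V : Type*} [Fintype V] [DecidableEq V] (G : SimpleGraph V)
    (k : ℕ) (hk : 1 ≤ k) (U : Finset V) (hU : 2 ≤ U.card) :
    ∃ P : Fin k → Finset V,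
      (∀ s t : Fin k, s ≠ t → Disjoint (P s) (P t)) ∧
      (Finset.univ.biUnion P = U) ∧
      (∀ t : Fin k, U.card / k ≤ (P t).card) ∧
      (∃ t : Fin k, (P t).Nonempty ∧
        ∀ v ∈ P t, degOn G (P t) v ≤ deg G v / k) := by
  have : NeZero k := ⟨by omega⟩
  obtain ⟨c, hc⟩ := exists_locally_optimal_coloring G U (ι := Fin k)
  obtain ⟨t, ht⟩ := exists_card_le_mul_card_fiber U c
  rw [Fintype.card_fin] at ht
  have hT : {v ∈ U | c v = t}.Nonempty := by
    rw [← card_pos]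
    exact Nat.pos_of_mul_pos_left (by omega : 0 < k * #{v ∈ U | c v = t})
  obtain ⟨f, hf_bal, hf_ne, hf_sub⟩ := exists_balanced_coloring_with_fiber_subset
    (filter_subset _ U) hT (by simpa using Nat.div_le_of_le_mul ht) t
  refine ⟨fun j => {v ∈ U | f v = j},
    fun s s' hss' => disjoint_filter.2 fun _ _ hs hs' => hss' (hs ▸ hs'),
    biUnion_filter_eq_of_maps_to fun v _ => mem_univ (f v), by simpa using hf_bal, t, hf_ne,
    fun v hv => ?_⟩
  have hcv : c v = t := (mem_filter.1 (hf_sub hv)).2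
  calc degOn G {w ∈ U | f w = t} v
      ≤ degOn G {w ∈ U | c w = c v} v := degOn_mono G (hcv ▸ hf_sub) v
    _ ≤ deg G v / Fintype.card (Fin k) :=
        degOn_fiber_le_deg_div G U c (hc v (filter_subset _ U (hf_sub hv)))
    _ = deg G v / k := by rw [Fintype.card_fin]

end SwapSchelling
end
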